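/- Let g : {1,...,⌊n/2⌋} → ℝ be strictly decreasing and strictly convex, and let m with 1 ≤ m ≤ n. Then the set J^0_{n,m} = { ⌊ni/m⌋ : 0 ≤ i < m } ⊆ ℤ/nℤ is a minimizer of E_g on C_n: for every B ⊆ ℤ/nℤ with |B| = m, E_g(J^0_{n,m}) ≤ E_g(B). -/

import Mathlib

/-- Geodesic distance in the cycle `C_n` on vertex set `ℤ/nℤ`. -/
def cycleDist (n : ℕ) (u v : ZMod n) [NeZero n] : ℕ :=
  min (v - u).val (n - (v - u).val)

/-- The `g`-energy of a set of vertices of `C_n`: the sum of `g` of the geodesic distances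
over unordered pairs of distinct vertices. -/
noncomputable def Ecyc (n : ℕ) [NeZero n] (g : ℕ → ℝ) (A : Finset (ZMod n)) : ℝ :=
  (∑ p ∈ A.offDiag, g (cycleDist n p.1 p.2)) / 2

/-- The Clough–Douthett set `J^0_{n,m} = { ⌊ni/m⌋ : 0 ≤ i < m } ⊆ ℤ/nℤ`. -/
def J0set (n m : ℕ) : Finset (ZMod n) :=
  (Finset.range m).image (fun i => ((n * i / m : ℕ) : ZMod n))

/-!
Enumerate an `m`-set increasingly as `c 0 < ⋯ < c (m - 1)` in `{0, …, n - 1}`. Grouping ordered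
pairs by their index difference `k`, twice the energy is `∑_{k ≠ 0} ∑_i f (ℓ_k i)`, where
`ℓ_k i = (c (i + k) - c i) mod n ∈ [1, n - 1]` and `f t = g (min t (n - t))`. The `k`-step gaps of
every set sum to `k n`, and those of `J^0_{n,m}` all equal `⌊nk/m⌋` or `⌊nk/m⌋ + 1`. Since `g` is
decreasing and convex on `[1, n/2]`, its reflection `f` is convex on `[1, n - 1]`, and by a
discrete Jensen inequality balanced gap vectors minimise `∑ f` among those with a given sum.
-/

open Finset

def DiscreteConvexOn (N : ℕ) (h : ℕ → ℝ) : Prop :=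
  ∀ a b : ℕ, 1 ≤ a → a ≤ b → b + 1 ≤ N → h (a + 1) - h a ≤ h (b + 1) - h b

namespace DiscreteConvexOn

variable {N : ℕ} {h : ℕ → ℝ}

theorem add_mul_slope_le (hh : DiscreteConvexOn N h) {q ℓ : ℕ} (hq : 1 ≤ q) (hqN : q + 1 ≤ N)
    (hℓ : 1 ≤ ℓ) (hℓN : ℓ ≤ N) :
    h q + ((ℓ : ℝ) - q) * (h (q + 1) - h q) ≤ h ℓ := by
  rcases le_total q ℓ with hqℓ | hℓq
  · induction ℓ, hqℓ using Nat.le_induction with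
    | base => simp
    | succ ℓ hqℓ ih =>
      have hslope := hh q ℓ hq hqℓ hℓN
      have := ih (by omega) (by omega)
      push_cast
      linear_combination this + hslope
  · induction hℓq using Nat.decreasingInduction with
    | self => simp
    | of_succ ℓ hℓq ih =>
      have hslope := hh ℓ q hℓ hℓq.le hqN
      have := ih (by omega) (by omega)
      push_cast at this
      linear_combination this + hslope

theorem sum_le_sum_of_balanced {ι : Type*} [Fintype ι] (hh : DiscreteConvexOn N h)
    {ℓ ℓ' : ι → ℕ} {q : ℕ} (hq : 1 ≤ q) (hℓ' : ∀ i, ℓ' i = q ∨ ℓ' i = q + 1)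
    (hℓ : ∀ i, 1 ≤ ℓ i ∧ ℓ i ≤ N) (hsum : ∑ i, ℓ' i = ∑ i, ℓ i) :
    ∑ i, h (ℓ' i) ≤ ∑ i, h (ℓ i) := by
  by_cases hqN : q + 1 ≤ N
  · -- `h` agrees with its chord through `q`, `q + 1` at balanced values and lies above it elsewhere
    set s := h (q + 1) - h q
    have hsumℝ : ∑ i, (ℓ' i : ℝ) = ∑ i, (ℓ i : ℝ) := by exact_mod_cast hsum
    calc ∑ i, h (ℓ' i) = ∑ i, (h q + ((ℓ' i : ℝ) - q) * s) :=
          sum_congr rfl fun i _ => by rcases hℓ' i with e | e <;> simp [e, s]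
      _ = ∑ i, (h q + ((ℓ i : ℝ) - q) * s) := by
          simp only [sum_add_distrib, ← sum_mul, sum_sub_distrib, hsumℝ]
      _ ≤ ∑ i, h (ℓ i) := sum_le_sum fun i _ => hh.add_mul_slope_le hq hqN (hℓ i).1 (hℓ i).2
  · -- every `ℓ i ≤ N ≤ q ≤ ℓ' i`, so equal sums force `ℓ = ℓ'`
    have hle : ∀ i ∈ univ, ℓ i ≤ ℓ' i := fun i _ => by have := hℓ i; have := hℓ' i; omega
    have heq := (sum_eq_sum_iff_of_le hle).1 hsum.symm
    exact (sum_congr rfl fun i hi => by rw [heq i hi]).le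

end DiscreteConvexOn

def cycleProfile (n : ℕ) (g : ℕ → ℝ) (t : ℕ) : ℝ := g (min t (n - t))

section CycleProfile

variable {n : ℕ} {g : ℕ → ℝ}

theorem cycleProfile_slope_of_two_mul_add_two_le {t : ℕ} (ht : 2 * t + 2 ≤ n) :
    cycleProfile n g (t + 1) - cycleProfile n g t = g (t + 1) - g t := by
  rw [cycleProfile, cycleProfile, min_eq_left (by omega), min_eq_left (by omega)]

theorem cycleProfile_slope_of_le_two_mul {t : ℕ} (ht : n ≤ 2 * t) (htn : t < n) :
    cycleProfile n g (t + 1) - cycleProfile n g t = -(g (n - (t + 1) + 1) - g (n - (t + 1))) := by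
  rw [cycleProfile, cycleProfile, min_eq_right (by omega), min_eq_right (by omega),
    show n - (t + 1) + 1 = n - t by omega]
  ring

theorem cycleProfile_slope_of_eq_two_mul_add_one {t : ℕ} (ht : n = 2 * t + 1) :
    cycleProfile n g (t + 1) - cycleProfile n g t = 0 := by
  rw [cycleProfile, cycleProfile, min_eq_right (by omega), min_eq_left (by omega),
    show n - (t + 1) = t by omega, sub_self]

theorem cycleProfile_slope_nonpos (hdec : ∀ i : ℕ, 1 ≤ i → i + 1 ≤ n / 2 → g (i + 1) < g i)
    {t : ℕ} (ht : 1 ≤ t) (htn : 2 * t < n) :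
    cycleProfile n g (t + 1) - cycleProfile n g t ≤ 0 := by
  rcases Nat.lt_or_ge (2 * t + 1) n with h | h
  · rw [cycleProfile_slope_of_two_mul_add_two_le h]
    linarith [hdec t ht (by omega)]
  · rw [cycleProfile_slope_of_eq_two_mul_add_one (by omega)]

theorem cycleProfile_slope_nonneg (hdec : ∀ i : ℕ, 1 ≤ i → i + 1 ≤ n / 2 → g (i + 1) < g i)
    {t : ℕ} (ht : n ≤ 2 * t + 1) (htn : t + 2 ≤ n) :
    0 ≤ cycleProfile n g (t + 1) - cycleProfile n g t := by
  rcases Nat.lt_or_ge n (2 * t + 1) with h | h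
  · rw [cycleProfile_slope_of_le_two_mul (by omega) (by omega)]
    linarith [hdec (n - (t + 1)) (by omega) (by omega)]
  · rw [cycleProfile_slope_of_eq_two_mul_add_one (by omega)]

theorem discreteConvexOn_cycleProfile
    (hdec : ∀ i : ℕ, 1 ≤ i → i + 1 ≤ n / 2 → g (i + 1) < g i)
    (hconv : ∀ i j : ℕ, 1 ≤ i → i < j → j + 1 ≤ n / 2 → g (i + 1) - g i < g (j + 1) - g j) :
    DiscreteConvexOn (n - 1) (cycleProfile n g) := by
  intro a b ha hab hb
  rcases hab.eq_or_lt with rfl | hab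
  · exact le_rfl
  by_cases hbL : 2 * b + 2 ≤ n
  · rw [cycleProfile_slope_of_two_mul_add_two_le (by omega),
      cycleProfile_slope_of_two_mul_add_two_le hbL]
    exact (hconv a b ha hab (by omega)).le
  by_cases haR : n ≤ 2 * a
  · rw [cycleProfile_slope_of_le_two_mul haR (by omega),
      cycleProfile_slope_of_le_two_mul (by omega) (by omega)]
    linarith [hconv (n - (b + 1)) (n - (a + 1)) (by omega) (by omega) (by omega)]
  · linarith [cycleProfile_slope_nonpos hdec ha (by omega : 2 * a < n),
      cycleProfile_slope_nonneg hdec (by omega : n ≤ 2 * b + 1) (by omega)]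

end CycleProfile

theorem Finset.offDiag_image_of_injective {α β : Type*} [DecidableEq α] [DecidableEq β]
    {F : α → β} (hF : Function.Injective F) (s : Finset α) :
    (s.image F).offDiag = s.offDiag.image (Prod.map F F) := by
  ext ⟨x, y⟩
  simp only [mem_offDiag, mem_image, Prod.exists, Prod.map, Prod.mk.injEq]
  constructor
  · rintro ⟨⟨a, ha, rfl⟩, ⟨b, hb, rfl⟩, hab⟩
    exact ⟨a, b, ⟨ha, hb, fun h => hab (h ▸ rfl)⟩, rfl, rfl⟩
  · rintro ⟨a, b, ⟨ha, hb, hab⟩, rfl, rfl⟩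
    exact ⟨⟨a, ha, rfl⟩, ⟨b, hb, rfl⟩, hF.ne hab⟩

theorem sum_offDiag_univ_eq_sum_sum_add {A M : Type*} [AddCommGroup A] [Fintype A]
    [DecidableEq A] [AddCommMonoid M] (H : A → A → M) :
    ∑ p ∈ (univ : Finset A).offDiag, H p.1 p.2 = ∑ k ∈ univ.erase 0, ∑ i, H i (i + k) := by
  rw [← sum_product_right' univ (univ.erase 0) fun i k => H i (i + k)]
  refine sum_nbij' (fun p => (p.1, p.2 - p.1)) (fun x => (x.1, x.1 + x.2)) ?_ ?_ ?_ ?_ ?_ <;>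
    simp [sub_eq_zero, eq_comm]

theorem ZMod.val_natCast_sub_natCast_of_le {n a b : ℕ} (ha : a < n) (hba : b ≤ a) :
    ((a : ZMod n) - b).val = a - b := by
  rw [← Nat.cast_sub hba, ZMod.val_cast_of_lt (by omega)]

theorem ZMod.val_natCast_sub_natCast_of_lt {n a b : ℕ} (hb : b < n) (hab : a < b) :
    ((a : ZMod n) - b).val = n + a - b := by
  rw [show (a : ZMod n) - b = ((n + a - b : ℕ) : ZMod n) by
      push_cast [Nat.cast_sub (by omega : b ≤ n + a)]; simp,
    ZMod.val_cast_of_lt (by omega)]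

section StepGap

variable {n m : ℕ} {c : Fin m → ℕ}

def stepGap (n : ℕ) (c : Fin m → ℕ) (k i : Fin m) : ℕ :=
  ((c (i + k) : ZMod n) - (c i : ZMod n)).val

theorem natCast_comp_injective (hc : StrictMono c) (hcn : ∀ i, c i < n) :
    Function.Injective fun i => (c i : ZMod n) := by
  intro i j hij
  have := congrArg ZMod.val hij
  simp only [ZMod.val_cast_of_lt (hcn _)] at this
  exact hc.injective this

theorem Ecyc_image_eq [NeZero n] [NeZero m] (g : ℕ → ℝ)
    (hinj : Function.Injective fun i => (c i : ZMod n)) :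
    Ecyc n g (univ.image fun i => (c i : ZMod n)) =
      (∑ k ∈ univ.erase 0, ∑ i, cycleProfile n g (stepGap n c k i)) / 2 := by
  rw [Ecyc, offDiag_image_of_injective hinj,
    sum_image (Prod.map_injective.2 ⟨hinj, hinj⟩).injOn]
  exact congrArg (· / 2) (sum_offDiag_univ_eq_sum_sum_add fun i j => g (cycleDist n (c i) (c j)))

theorem one_le_stepGap [NeZero m] (hinj : Function.Injective fun i => (c i : ZMod n)) {k : Fin m}
    (hk : k ≠ 0) (i : Fin m) : 1 ≤ stepGap n c k i :=
  ZMod.val_pos.2 <| sub_ne_zero.2 <| hinj.ne <| by simpa using hk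

theorem stepGap_lt [NeZero n] (k i : Fin m) : stepGap n c k i < n := ZMod.val_lt _

theorem stepGap_eq (hc : StrictMono c) (hcn : ∀ i, c i < n) (k i : Fin m) :
    (stepGap n c k i : ℤ) = c (i + k) - c i + if i.val + k.val < m then 0 else (n : ℤ) := by
  have hadd := Fin.val_add_eq_ite i k
  by_cases hwrap : i.val + k.val < m
  · rw [if_neg (by omega)] at hadd
    have hle : i ≤ i + k := Fin.le_def.2 (by omega)
    rw [if_pos hwrap, stepGap, ZMod.val_natCast_sub_natCast_of_le (hcn _) (hc.monotone hle)]
    have := hc.monotone hle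
    omega
  · rw [if_pos (by omega)] at hadd
    have hlt : i + k < i := Fin.lt_def.2 (by omega)
    rw [if_neg hwrap, stepGap, ZMod.val_natCast_sub_natCast_of_lt (hcn i) (hc hlt)]
    have := hc hlt
    have := hcn i
    omega

theorem sum_stepGap [NeZero m] (hc : StrictMono c) (hcn : ∀ i, c i < n) (k : Fin m) :
    ∑ i, stepGap n c k i = k.val * n := by
  have hwraps : ∑ i : Fin m, (if i.val + k.val < m then 0 else (n : ℤ)) = k.val * n := by
    rw [Fin.sum_univ_eq_sum_range (fun i => if i + k.val < m then 0 else (n : ℤ)),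
      ← sum_range_add_sum_Ico _ (show m - k.val ≤ m by omega),
      sum_eq_zero fun i hi => if_pos (by rw [mem_range] at hi; omega),
      sum_congr rfl fun i hi => if_neg (by rw [mem_Ico] at hi; omega)]
    simp [Nat.sub_sub_self k.isLt.le]
  have hshift : ∑ i, (c (i + k) : ℤ) = ∑ i, (c i : ℤ) :=
    Fintype.sum_equiv (Equiv.addRight k) _ _ fun _ => rfl
  zify
  simp only [stepGap_eq hc hcn, sum_add_distrib, sum_sub_distrib, hshift, hwraps, sub_self,
    zero_add]

end StepGap

section CloughDouthett

variable {n m : ℕ}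

def cloughDouthett (n m : ℕ) (i : Fin m) : ℕ := n * i / m

theorem cloughDouthett_strictMono (hmn : m ≤ n) : StrictMono (cloughDouthett n m) := by
  intro i j hij
  have hm : 0 < m := i.pos
  have hstep : n * i + m ≤ n * j := by
    have : n * (i + 1) ≤ n * j := Nat.mul_le_mul_left n hij
    linarith
  have := Nat.div_le_div_right (c := m) hstep
  rwa [Nat.add_div_right _ hm] at this

theorem cloughDouthett_lt [NeZero n] (i : Fin m) : cloughDouthett n m i < n :=
  Nat.div_lt_of_lt_mul <| by
    rw [mul_comm m]; exact Nat.mul_lt_mul_of_pos_left i.isLt (NeZero.pos n)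

theorem J0set_eq_image : J0set n m = univ.image fun i => (cloughDouthett n m i : ZMod n) := by
  ext x
  simp [J0set, cloughDouthett, Fin.exists_iff]

theorem stepGap_cloughDouthett [NeZero n] (hmn : m ≤ n) (k i : Fin m) :
    stepGap n (cloughDouthett n m) k i = n * k / m ∨
      stepGap n (cloughDouthett n m) k i = n * k / m + 1 := by
  have hm : 0 < m := i.pos
  have hgap := stepGap_eq (cloughDouthett_strictMono hmn) cloughDouthett_lt k i
  have hcarry := Nat.add_div (a := n * i) (b := n * k) hm
  rw [← mul_add] at hcarry
  have hadd := Fin.val_add_eq_ite i k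
  simp only [cloughDouthett] at hgap
  -- in both cases the gap is `⌊n (i + k) / m⌋ - ⌊n i / m⌋`
  by_cases hwrap : i.val + k.val < m
  · rw [if_neg (by omega)] at hadd
    rw [hadd, if_pos hwrap] at hgap
    split_ifs at hcarry <;> omega
  · rw [if_pos (by omega)] at hadd
    have hshift : n * (i + k - m) / m + n = n * (i + k) / m := by
      rw [← Nat.add_mul_div_right _ _ hm, ← mul_add, Nat.sub_add_cancel (by omega)]
    rw [hadd, if_neg hwrap] at hgap
    split_ifs at hcarry <;> omega

end CloughDouthett

theorem exists_strictMono_natCast_image_eq {n m : ℕ} [NeZero n] {B : Finset (ZMod n)}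
    (hB : B.card = m) :
    ∃ c : Fin m → ℕ, StrictMono c ∧ (∀ i, c i < n) ∧
      univ.image (fun i => (c i : ZMod n)) = B := by
  have hV : (B.image ZMod.val).card = m := by
    rw [card_image_of_injective _ (ZMod.val_injective n), hB]
  refine ⟨(B.image ZMod.val).orderEmbOfFin hV, OrderEmbedding.strictMono _, fun i => ?_, ?_⟩
  · obtain ⟨b, -, hb⟩ := mem_image.1 (orderEmbOfFin_mem _ hV i)
    exact hb ▸ ZMod.val_lt b
  · have h := congrArg (image (Nat.cast : ℕ → ZMod n)) (image_orderEmbOfFin_univ _ hV)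
    rw [image_image, image_image] at h
    simpa [Function.comp_def, ZMod.natCast_zmod_val] using h

/-- If `g : {1,...,⌊n/2⌋} → ℝ` is strictly decreasing and strictly convex, then
`J^0_{n,m}` is a minimizer of `E_g` on `C_n` among `m`-element vertex sets. -/
theorem stmt_18 (n m : ℕ) [NeZero n] (hm : 1 ≤ m) (hmn : m ≤ n) (g : ℕ → ℝ)
    (hdec : ∀ i : ℕ, 1 ≤ i → i + 1 ≤ n / 2 → g (i + 1) < g i)
    (hconv : ∀ i j : ℕ, 1 ≤ i → i < j → j + 1 ≤ n / 2 →
      g (i + 1) - g i < g (j + 1) - g j) :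
    ∀ B : Finset (ZMod n), B.card = m → Ecyc n g (J0set n m) ≤ Ecyc n g B := by
  intro B hB
  have : NeZero m := ⟨by omega⟩
  obtain ⟨c, hc, hcn, rfl⟩ := exists_strictMono_natCast_image_eq hB
  have hJ := cloughDouthett_strictMono (n := n) hmn
  rw [J0set_eq_image, Ecyc_image_eq g (natCast_comp_injective hJ cloughDouthett_lt),
    Ecyc_image_eq g (natCast_comp_injective hc hcn)]
  refine div_le_div_of_nonneg_right (sum_le_sum fun k hk => ?_) zero_le_two
  have hk0 : k ≠ 0 := ne_of_mem_erase hk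
  have hk1 : 1 ≤ k.val := Nat.one_le_iff_ne_zero.2 (Fin.val_ne_zero_iff.2 hk0)
  have hq : 1 ≤ n * k / m :=
    (Nat.le_div_iff_mul_le (by omega)).2 (by nlinarith)
  exact (discreteConvexOn_cycleProfile hdec hconv).sum_le_sum_of_balanced hq
    (stepGap_cloughDouthett hmn k)
    (fun i => ⟨one_le_stepGap (natCast_comp_injective hc hcn) hk0 i,
      Nat.le_sub_one_of_lt (stepGap_lt k i)⟩)
    (by rw [sum_stepGap hJ cloughDouthett_lt, sum_stepGap hc hcn])
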